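/- arXiv:2402.16511 — 2 statements merged into one kernel-verified Lean document; each statement's English description precedes it below -/
import Mathlib

section
/- Let I₊ be a smooth function on (0,s₀] with I₊' > 0, and define Ψ(s,w) = (I₊(s) − I₊(w))/(s − w) for s ≠ w and Ψ(s,s) = I₊'(s). Then Ψ is positive on (0,s₀]², and if S is the slow relation function with I₋(s) + I₊(S(s)) = 0, the function Ĩ(s) = I₋(s) + I₊(s) factors as Ĩ(s) = Ψ(s, S(s))·(s − S(s)). Consequently, s₁ ∈ (0,s₀] is a zero of Ĩ of multiplicity l if and only if s₁ is a zero of s − S(s) of multiplicity l. -/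
open Set

private lemma stmt11_choose_aux (a b : ℕ → ℝ) (n : ℕ) :
    ∑ k ∈ Finset.range (n + 1),
        (n.choose k : ℝ) * (a (k + 1) * b (n - k) + a k * b (n - k + 1)) =
      ∑ k ∈ Finset.range (n + 2), ((n + 1).choose k : ℝ) * (a k * b (n + 1 - k)) := by
  have h1 : ∑ k ∈ Finset.range (n + 2), ((n + 1).choose k : ℝ) * (a k * b (n + 1 - k))
      = ∑ k ∈ Finset.range (n + 1), (((n + 1).choose (k + 1) : ℝ)) * (a (k + 1) * b (n - k))
        + a 0 * b (n + 1) := by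
    rw [Finset.sum_range_succ' (fun k => ((n + 1).choose k : ℝ) * (a k * b (n + 1 - k))) (n + 1)]
    simp [Nat.succ_sub_succ]
  have h2 : ∑ k ∈ Finset.range (n + 1), (n.choose k : ℝ) * (a k * b (n - k + 1))
      = ∑ k ∈ Finset.range n, (n.choose (k + 1) : ℝ) * (a (k + 1) * b (n - k))
        + a 0 * b (n + 1) := by
    rw [Finset.sum_range_succ' (fun k => (n.choose k : ℝ) * (a k * b (n - k + 1))) n]
    congr 1
    · apply Finset.sum_congr rfl
      intro k hk
      have hk' : k < n := Finset.mem_range.1 hk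
      have : n - (k + 1) + 1 = n - k := by omega
      rw [this]
    · simp
  have h3 : ∑ k ∈ Finset.range (n + 1), (((n + 1).choose (k + 1) : ℝ)) * (a (k + 1) * b (n - k))
      = ∑ k ∈ Finset.range (n + 1), (n.choose k : ℝ) * (a (k + 1) * b (n - k))
        + ∑ k ∈ Finset.range n, (n.choose (k + 1) : ℝ) * (a (k + 1) * b (n - k)) := by
    have hc : ∀ k : ℕ, (((n + 1).choose (k + 1) : ℝ)) = (n.choose k : ℝ) + (n.choose (k + 1) : ℝ) := by
      intro k
      exact_mod_cast congrArg (Nat.cast (R := ℝ)) (Nat.choose_succ_succ n k)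
    simp_rw [hc, add_mul]
    rw [Finset.sum_add_distrib]
    congr 1
    rw [Finset.sum_range_succ]
    simp [Nat.choose_succ_self]
  simp_rw [mul_add]
  rw [Finset.sum_add_distrib, h2, h1, h3]
  ring

private lemma stmt11_leibniz {s : Set ℝ} (hs : UniqueDiffOn ℝ s) {f g : ℝ → ℝ}
    (hf : ContDiffOn ℝ (⊤ : ℕ∞) f s) (hg : ContDiffOn ℝ (⊤ : ℕ∞) g s) (n : ℕ) :
    ∀ x ∈ s, iteratedDerivWithin n (fun y => f y * g y) s x =
      ∑ k ∈ Finset.range (n + 1), (n.choose k : ℝ) *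
        (iteratedDerivWithin k f s x * iteratedDerivWithin (n - k) g s x) := by
  have hD : ∀ (h : ℝ → ℝ), ContDiffOn ℝ (⊤ : ℕ∞) h s → ∀ (m : ℕ), ∀ y ∈ s,
      HasDerivWithinAt (iteratedDerivWithin m h s) (iteratedDerivWithin (m + 1) h s y) s y := by
    intro h hh m y hy
    have hm : (m : WithTop ℕ∞) < ((⊤ : ℕ∞) : WithTop ℕ∞) := by
      exact_mod_cast ENat.coe_lt_top m
    have hd : DifferentiableWithinAt ℝ (iteratedDerivWithin m h s) s y :=
      (hh.differentiableOn_iteratedDerivWithin hm hs) y hy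
    have := hd.hasDerivWithinAt
    rwa [← iteratedDerivWithin_succ] at this
  induction n with
  | zero => intro x hx; simp
  | succ n ih =>
    intro x hx
    have hEq : EqOn (iteratedDerivWithin n (fun y => f y * g y) s)
        (fun y => ∑ k ∈ Finset.range (n + 1), (n.choose k : ℝ) *
          (iteratedDerivWithin k f s y * iteratedDerivWithin (n - k) g s y)) s :=
      fun y hy => ih y hy
    rw [iteratedDerivWithin_succ, derivWithin_congr hEq (hEq hx)]
    have hsum : HasDerivWithinAt (fun y => ∑ k ∈ Finset.range (n + 1), (n.choose k : ℝ) *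
        (iteratedDerivWithin k f s y * iteratedDerivWithin (n - k) g s y))
        (∑ k ∈ Finset.range (n + 1), (n.choose k : ℝ) *
          (iteratedDerivWithin (k + 1) f s x * iteratedDerivWithin (n - k) g s x
            + iteratedDerivWithin k f s x * iteratedDerivWithin (n - k + 1) g s x)) s x := by
      apply HasDerivWithinAt.fun_sum
      intro k _
      exact HasDerivWithinAt.const_mul _ ((hD f hf k x hx).mul (hD g hg (n - k) x hx))
    rw [hsum.derivWithin (hs x hx)]
    exact stmt11_choose_aux (fun k => iteratedDerivWithin k f s x)
      (fun k => iteratedDerivWithin k g s x) n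

private lemma stmt11_comp_deriv {s : Set ℝ} (hs : UniqueDiffOn ℝ s) {F T : ℝ → ℝ}
    (hF : ContDiffOn ℝ (⊤ : ℕ∞) F s) (hT : ContDiffOn ℝ (⊤ : ℕ∞) T s) (hm : MapsTo T s s) :
    EqOn (derivWithin (fun y => F (T y)) s)
      (fun y => derivWithin F s (T y) * derivWithin T s y) s := by
  intro y hy
  have h1 : DifferentiableWithinAt ℝ F s (T y) :=
    (hF.differentiableOn (by simp)) (T y) (hm hy)
  have h2 : DifferentiableWithinAt ℝ T s y :=
    (hT.differentiableOn (by simp)) y hy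
  exact derivWithin_comp (x := y) h1 h2 hm

private lemma stmt11_top_add_one : ((⊤ : ℕ∞) : WithTop ℕ∞) + 1 ≤ ((⊤ : ℕ∞) : WithTop ℕ∞) := by
  norm_num

private lemma stmt11_comp_expand {s : Set ℝ} (hs : UniqueDiffOn ℝ s) {F T : ℝ → ℝ}
    (hF : ContDiffOn ℝ (⊤ : ℕ∞) F s) (hT : ContDiffOn ℝ (⊤ : ℕ∞) T s) (hm : MapsTo T s s)
    (m : ℕ) {a : ℝ} (ha : a ∈ s) :
    iteratedDerivWithin (m + 1) (fun y => F (T y)) s a =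
      ∑ k ∈ Finset.range (m + 1), (m.choose k : ℝ) *
        (iteratedDerivWithin k (fun y => derivWithin F s (T y)) s a *
          iteratedDerivWithin (m + 1 - k) T s a) := by
  have hF' : ContDiffOn ℝ (⊤ : ℕ∞) (derivWithin F s) s := hF.derivWithin hs stmt11_top_add_one
  have hF'T : ContDiffOn ℝ (⊤ : ℕ∞) (fun y => derivWithin F s (T y)) s := hF'.comp hT hm
  have hT' : ContDiffOn ℝ (⊤ : ℕ∞) (derivWithin T s) s := hT.derivWithin hs stmt11_top_add_one
  rw [iteratedDerivWithin_succ',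
    iteratedDerivWithin_congr (stmt11_comp_deriv hs hF hT hm) ha,
    stmt11_leibniz hs hF'T hT' m a ha]
  apply Finset.sum_congr rfl
  intro k hk
  have hk' : k ≤ m := Nat.lt_succ_iff.1 (Finset.mem_range.1 hk)
  rw [← iteratedDerivWithin_succ']
  have : m - k + 1 = m + 1 - k := by omega
  rw [this]

private lemma stmt11_jet {s : Set ℝ} (hs : UniqueDiffOn ℝ s) :
    ∀ (j : ℕ) (F T T' : ℝ → ℝ), ContDiffOn ℝ (⊤ : ℕ∞) F s → ContDiffOn ℝ (⊤ : ℕ∞) T s →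
      ContDiffOn ℝ (⊤ : ℕ∞) T' s → MapsTo T s s → MapsTo T' s s → ∀ a ∈ s,
      (∀ i ≤ j, iteratedDerivWithin i T s a = iteratedDerivWithin i T' s a) →
      iteratedDerivWithin j (fun y => F (T y)) s a
        = iteratedDerivWithin j (fun y => F (T' y)) s a := by
  intro j
  induction j using Nat.strong_induction_on with
  | _ j ih =>
    intro F T T' hF hT hT' hm hm' a ha hagree
    cases j with
    | zero =>
      have h0 := hagree 0 le_rfl
      simp only [iteratedDerivWithin_zero] at h0 ⊢
      rw [h0]
    | succ m =>
      rw [stmt11_comp_expand hs hF hT hm m ha, stmt11_comp_expand hs hF hT' hm' m ha]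
      apply Finset.sum_congr rfl
      intro k hk
      have hk' : k ≤ m := Nat.lt_succ_iff.1 (Finset.mem_range.1 hk)
      have hF' : ContDiffOn ℝ (⊤ : ℕ∞) (derivWithin F s) s := hF.derivWithin hs stmt11_top_add_one
      rw [ih k (by omega) (derivWithin F s) T T' hF' hT hT' hm hm' a ha
          (fun i hi => hagree i (by omega)),
        hagree (m + 1 - k) (by omega)]

private lemma stmt11_key {s : Set ℝ} (hs : UniqueDiffOn ℝ s) (F T T' : ℝ → ℝ)
    (hF : ContDiffOn ℝ (⊤ : ℕ∞) F s) (hT : ContDiffOn ℝ (⊤ : ℕ∞) T s)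
    (hT' : ContDiffOn ℝ (⊤ : ℕ∞) T' s) (hm : MapsTo T s s) (hm' : MapsTo T' s s)
    (m : ℕ) {a : ℝ} (ha : a ∈ s)
    (hagree : ∀ i ≤ m, iteratedDerivWithin i T s a = iteratedDerivWithin i T' s a) :
    iteratedDerivWithin (m + 1) (fun y => F (T y)) s a
        - iteratedDerivWithin (m + 1) (fun y => F (T' y)) s a
      = derivWithin F s (T a) *
          (iteratedDerivWithin (m + 1) T s a - iteratedDerivWithin (m + 1) T' s a) := by
  rw [stmt11_comp_expand hs hF hT hm m ha, stmt11_comp_expand hs hF hT' hm' m ha,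
    ← Finset.sum_sub_distrib]
  rw [Finset.sum_eq_single_of_mem 0 (by simp)]
  · simp only [Nat.choose_zero_right, Nat.cast_one, one_mul, Nat.sub_zero,
      iteratedDerivWithin_zero]
    have h0 := hagree 0 (Nat.zero_le m)
    simp only [iteratedDerivWithin_zero] at h0
    rw [h0]
    ring
  · intro k hk hk0
    have hkm : k ≤ m := Nat.lt_succ_iff.1 (Finset.mem_range.1 hk)
    have hF' : ContDiffOn ℝ (⊤ : ℕ∞) (derivWithin F s) s := hF.derivWithin hs stmt11_top_add_one
    rw [stmt11_jet hs k (derivWithin F s) T T' hF' hT hT' hm hm' a ha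
        (fun i hi => hagree i (le_trans hi hkm)),
      hagree (m + 1 - k) (by omega)]
    ring

private lemma stmt11_const_iter {s : Set ℝ} (hs : UniqueDiffOn ℝ s) {a : ℝ} (ha : a ∈ s) :
    ∀ (j : ℕ) (c : ℝ), 1 ≤ j → iteratedDerivWithin j (fun _ : ℝ => c) s a = 0 := by
  intro j
  induction j with
  | zero => intro c h; omega
  | succ m ihm =>
    intro c _
    have hEq : EqOn (derivWithin (fun _ : ℝ => c) s) (fun _ : ℝ => (0 : ℝ)) s :=
      fun y hy => by simp
    rw [iteratedDerivWithin_succ', iteratedDerivWithin_congr hEq ha]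
    rcases Nat.eq_zero_or_pos m with h | h
    · subst h; simp
    · exact ihm 0 h

private lemma stmt11_id_iter {s : Set ℝ} (hs : UniqueDiffOn ℝ s) {a : ℝ} (ha : a ∈ s) :
    ∀ j : ℕ, 2 ≤ j → iteratedDerivWithin j (fun y : ℝ => y) s a = 0 := by
  intro j hj
  obtain ⟨m, rfl⟩ : ∃ m, j = m + 1 := ⟨j - 1, by omega⟩
  have hEq : EqOn (derivWithin (fun y : ℝ => y) s) (fun _ : ℝ => (1 : ℝ)) s :=
    fun y hy => derivWithin_id y s (hs y hy)
  rw [iteratedDerivWithin_succ', iteratedDerivWithin_congr hEq ha]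
  exact stmt11_const_iter hs ha m 1 (by omega)

/-- Factorization of the slow divergence integral: with
`Ψ(s,w) = (I₊(s) − I₊(w))/(s − w)` (`= I₊'(s)` on the diagonal), `Ψ` is positive on
`(0,s₀]²`, `Ĩ(s) = I₋(s) + I₊(s) = Ψ(s,S(s))·(s − S(s))`, and `s₁ ∈ (0,s₀]` is a zero of
`Ĩ` of multiplicity `l` iff it is a zero of `s − S(s)` of multiplicity `l`. -/
theorem stmt11 (s₀ : ℝ) (hs₀ : 0 < s₀) (Ip Im S : ℝ → ℝ)
    (hIp : ContDiffOn ℝ (⊤ : ℕ∞) Ip (Ioc 0 s₀))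
    (hIp' : ∀ s ∈ Ioc 0 s₀, 0 < derivWithin Ip (Ioc 0 s₀) s)
    (hS : ContDiffOn ℝ (⊤ : ℕ∞) S (Ioc 0 s₀))
    (hS' : ∀ s ∈ Ioc 0 s₀, 0 < derivWithin S (Ioc 0 s₀) s)
    (hmaps : MapsTo S (Ioc 0 s₀) (Ioc 0 s₀))
    (hrel : ∀ s ∈ Ioc 0 s₀, Im s + Ip (S s) = 0) :
    (∀ s ∈ Ioc 0 s₀, ∀ w ∈ Ioc 0 s₀,
        0 < (if s = w then derivWithin Ip (Ioc 0 s₀) s else (Ip s - Ip w) / (s - w))) ∧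
    (∀ s ∈ Ioc 0 s₀, Im s + Ip s =
        (if s = S s then derivWithin Ip (Ioc 0 s₀) s
          else (Ip s - Ip (S s)) / (s - S s)) * (s - S s)) ∧
    (∀ s₁ ∈ Ioc 0 s₀, ∀ l : ℕ,
        (((∀ j < l, iteratedDerivWithin j (fun s => Im s + Ip s) (Ioc 0 s₀) s₁ = 0) ∧
            iteratedDerivWithin l (fun s => Im s + Ip s) (Ioc 0 s₀) s₁ ≠ 0) ↔
          ((∀ j < l, iteratedDerivWithin j (fun s => s - S s) (Ioc 0 s₀) s₁ = 0) ∧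
            iteratedDerivWithin l (fun s => s - S s) (Ioc 0 s₀) s₁ ≠ 0))) := by
  have hA : UniqueDiffOn ℝ (Ioc (0:ℝ) s₀) := uniqueDiffOn_Ioc 0 s₀
  have hIp2 : ContDiffOn ℝ (⊤ : ℕ∞) Ip (Ioc 0 s₀) := hIp.of_le (by simp)
  have hS2 : ContDiffOn ℝ (⊤ : ℕ∞) S (Ioc 0 s₀) := hS.of_le (by simp)
  have hmono : StrictMonoOn Ip (Ioc 0 s₀) := by
    apply strictMonoOn_of_deriv_pos (convex_Ioc 0 s₀) hIp2.continuousOn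
    intro x hx
    rw [interior_Ioc] at hx
    have hmem : Ioc (0:ℝ) s₀ ∈ nhds x := Ioc_mem_nhds hx.1 hx.2
    rw [← derivWithin_of_mem_nhds hmem]
    exact hIp' x (Ioo_subset_Ioc_self hx)
  refine ⟨?_, ?_, ?_⟩
  · intro x hx w hw
    split_ifs with h
    · exact hIp' x hx
    · rcases lt_or_gt_of_ne h with hlt | hgt
      · have h1 := hmono hx hw hlt
        exact div_pos_of_neg_of_neg (by linarith) (by linarith)
      · have h1 := hmono hw hx hgt
        exact div_pos (by linarith) (by linarith)
  · intro x hx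
    have hr := hrel x hx
    split_ifs with h
    · have hz : x - S x = 0 := by rw [← h]; ring
      rw [hz, mul_zero]
      rw [← h] at hr
      linarith
    · have hx0 : x - S x ≠ 0 := sub_ne_zero_of_ne h
      rw [div_mul_cancel₀ _ hx0]
      linarith
  · intro a ha l
    have hucong : ∀ j : ℕ, iteratedDerivWithin j (fun y => Im y + Ip y) (Ioc 0 s₀) a
        = iteratedDerivWithin j (fun y => Ip y - Ip (S y)) (Ioc 0 s₀) a := by
      intro j
      refine iteratedDerivWithin_congr (fun y hy => ?_) ha
      have := hrel y hy
      show Im y + Ip y = Ip y - Ip (S y)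
      linarith
    have hcast : ∀ j : ℕ, (j : WithTop ℕ∞) ≤ ((⊤ : ℕ∞) : WithTop ℕ∞) := by
      intro j; exact_mod_cast le_top
    have hid2 : ContDiffOn ℝ (⊤ : ℕ∞) (fun y : ℝ => y) (Ioc 0 s₀) := contDiffOn_id
    have hmid : MapsTo (fun y : ℝ => y) (Ioc 0 s₀) (Ioc 0 s₀) := fun y hy => hy
    have hgj : ∀ j : ℕ, iteratedDerivWithin j (fun y => y - S y) (Ioc 0 s₀) a
        = iteratedDerivWithin j (fun y : ℝ => y) (Ioc 0 s₀) a
          - iteratedDerivWithin j S (Ioc 0 s₀) a := by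
      intro j
      have hEq : EqOn (fun y : ℝ => y - S y) ((fun y : ℝ => y) - S) (Ioc 0 s₀) :=
        fun y _ => rfl
      rw [iteratedDerivWithin_congr hEq ha,
        iteratedDerivWithin_sub ha hA (hid2.of_le (hcast j) a ha) (hS2.of_le (hcast j) a ha)]
    have hIpS : ContDiffOn ℝ (⊤ : ℕ∞) (fun y => Ip (S y)) (Ioc 0 s₀) := hIp2.comp hS2 hmaps
    have huj : ∀ j : ℕ, iteratedDerivWithin j (fun y => Ip y - Ip (S y)) (Ioc 0 s₀) a
        = iteratedDerivWithin j Ip (Ioc 0 s₀) a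
          - iteratedDerivWithin j (fun y => Ip (S y)) (Ioc 0 s₀) a := by
      intro j
      have hEq : EqOn (fun y : ℝ => Ip y - Ip (S y)) (Ip - fun y => Ip (S y)) (Ioc 0 s₀) :=
        fun y _ => rfl
      rw [iteratedDerivWithin_congr hEq ha,
        iteratedDerivWithin_sub ha hA (hIp2.of_le (hcast j) a ha) (hIpS.of_le (hcast j) a ha)]
    by_cases hfix : S a = a
    · -- fixed point case
      have hK := hIp' a ha
      have hkey : ∀ m : ℕ, (∀ j < m, iteratedDerivWithin j (fun y => y - S y) (Ioc 0 s₀) a = 0) →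
          iteratedDerivWithin m (fun y => Ip y - Ip (S y)) (Ioc 0 s₀) a
            = derivWithin Ip (Ioc 0 s₀) a *
                iteratedDerivWithin m (fun y => y - S y) (Ioc 0 s₀) a := by
        intro m hz
        cases m with
        | zero =>
          simp only [iteratedDerivWithin_zero, hfix]
          ring
        | succ m =>
          have hagree : ∀ i ≤ m, iteratedDerivWithin i S (Ioc 0 s₀) a
              = iteratedDerivWithin i (fun y : ℝ => y) (Ioc 0 s₀) a := by
            intro i hi
            have h0 := hz i (by omega)
            rw [hgj i] at h0
            linarith
          have hQ := stmt11_key hA Ip S (fun y : ℝ => y) hIp2 hS2 hid2 hmaps hmid m ha hagree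
          rw [hfix] at hQ
          have hEqid : iteratedDerivWithin (m + 1) (fun y => Ip ((fun z : ℝ => z) y)) (Ioc 0 s₀) a
              = iteratedDerivWithin (m + 1) Ip (Ioc 0 s₀) a :=
            iteratedDerivWithin_congr (fun y _ => rfl) ha
          rw [hEqid] at hQ
          have hgj' := hgj (m + 1)
          rw [huj (m + 1)]
          linear_combination -hQ - derivWithin Ip (Ioc 0 s₀) a * hgj'
      have hzeq : ∀ m : ℕ,
          ((∀ j < m, iteratedDerivWithin j (fun y => Ip y - Ip (S y)) (Ioc 0 s₀) a = 0) ↔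
            (∀ j < m, iteratedDerivWithin j (fun y => y - S y) (Ioc 0 s₀) a = 0)) := by
        intro m
        constructor
        · intro h j
          induction j using Nat.strong_induction_on with
          | _ j ih =>
            intro hj
            have hzz : ∀ i < j, iteratedDerivWithin i (fun y => y - S y) (Ioc 0 s₀) a = 0 :=
              fun i hi => ih i hi (hi.trans hj)
            have hk := hkey j hzz
            rw [h j hj] at hk
            rcases mul_eq_zero.1 hk.symm with h' | h'
            · exact absurd h' (ne_of_gt hK)
            · exact h'
        · intro h j hj
          rw [hkey j (fun i hi => h i (hi.trans hj)), h j hj, mul_zero]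
      constructor
      · rintro ⟨h0, h1⟩
        have h0' : ∀ j < l, iteratedDerivWithin j (fun y => Ip y - Ip (S y)) (Ioc 0 s₀) a = 0 :=
          fun j hj => by rw [← hucong j]; exact h0 j hj
        have hg0 := (hzeq l).1 h0'
        refine ⟨hg0, fun hc => ?_⟩
        apply h1
        rw [hucong l, hkey l hg0, hc, mul_zero]
      · rintro ⟨h0, h1⟩
        have hu0 : ∀ j < l, iteratedDerivWithin j (fun y => Ip y - Ip (S y)) (Ioc 0 s₀) a = 0 :=
          (hzeq l).2 h0
        refine ⟨fun j hj => by rw [hucong j]; exact hu0 j hj, ?_⟩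
        rw [hucong l, hkey l h0]
        exact mul_ne_zero (ne_of_gt hK) h1
    · -- not a fixed point: values are nonzero
      have hvalu : Ip a - Ip (S a) ≠ 0 := by
        refine sub_ne_zero_of_ne fun hc => hfix ?_
        exact hmono.injOn ha (hmaps ha) hc ▸ rfl
      have hvalg : a - S a ≠ 0 := sub_ne_zero_of_ne (fun h => hfix h.symm)
      rcases Nat.eq_zero_or_pos l with rfl | hl
      · apply iff_of_true
        · refine ⟨fun j hj => absurd hj (Nat.not_lt_zero _), ?_⟩
          rw [hucong 0, iteratedDerivWithin_zero]
          exact hvalu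
        · refine ⟨fun j hj => absurd hj (Nat.not_lt_zero _), ?_⟩
          rw [iteratedDerivWithin_zero]
          exact hvalg
      · apply iff_of_false
        · rintro ⟨h0, -⟩
          have := h0 0 hl
          rw [hucong 0, iteratedDerivWithin_zero] at this
          exact hvalu this
        · rintro ⟨h0, -⟩
          have := h0 0 hl
          rw [iteratedDerivWithin_zero] at this
          exact hvalg this
end

section
/- Consider the van der Pol critical curve f(x) = x²/2 + x³/3 and g(x) = −x. For s ∈ (0, 1/6), let α₁(s) ∈ (−1,0) and ω₁(s) ∈ (0,∞) be the two solutions of f(x) = s with α₁(s) < 0 < ω₁(s). Then the slow divergence integral Ĩ(s) = −∫_{α₁(s)}^{ω₁(s)} x(1+x)² dx is strictly negative for all s ∈ (0,1/6). -/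
/-! Writing `f x = x²/2 + x³/3`, a primitive of `x(1+x)²` is `f x + x³/3 + x⁴/4`. Since
`f α = f ω`, the integral reduces to `h ω - h α` with `h x = x³(4 + 3x)/12`, which is positive
for `ω > 0` and negative for `α ∈ (-1, 0)`. -/

open Set intervalIntegral

theorem hasDerivAt_vanDerPol_primitive (x : ℝ) :
    HasDerivAt (fun x : ℝ => x ^ 2 / 2 + x ^ 3 / 3 + (x ^ 3 / 3 + x ^ 4 / 4))
      (x * (1 + x) ^ 2) x := by
  have h := (((hasDerivAt_pow 2 x).div_const 2).add ((hasDerivAt_pow 3 x).div_const 3)).add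
    (((hasDerivAt_pow 3 x).div_const 3).add ((hasDerivAt_pow 4 x).div_const 4))
  refine h.congr_deriv ?_
  norm_num
  ring

theorem integral_mul_one_add_sq (a b : ℝ) :
    ∫ x in a..b, x * (1 + x) ^ 2 =
      (b ^ 2 / 2 + b ^ 3 / 3 + (b ^ 3 / 3 + b ^ 4 / 4)) -
        (a ^ 2 / 2 + a ^ 3 / 3 + (a ^ 3 / 3 + a ^ 4 / 4)) :=
  integral_eq_sub_of_hasDerivAt (fun x _ => hasDerivAt_vanDerPol_primitive x)
    ((by fun_prop : Continuous fun x : ℝ => x * (1 + x) ^ 2).intervalIntegrable a b)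

theorem cube_div_three_add_pow_four_div_four_neg {x : ℝ} (hlow : -(4 / 3) < x) (hneg : x < 0) :
    x ^ 3 / 3 + x ^ 4 / 4 < 0 := by
  have hcube : x ^ 3 < 0 := Odd.pow_neg (by decide) hneg
  have hfactor : x ^ 3 / 3 + x ^ 4 / 4 = x ^ 3 * (4 + 3 * x) / 12 := by ring
  rw [hfactor]
  exact div_neg_of_neg_of_pos (mul_neg_of_neg_of_pos hcube (by linarith)) (by norm_num)

theorem stmt13_general (s α ω : ℝ)
    (hα : α ∈ Ioo (-1 : ℝ) 0) (hω : 0 < ω)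
    (hfα : α ^ 2 / 2 + α ^ 3 / 3 = s)
    (hfω : ω ^ 2 / 2 + ω ^ 3 / 3 = s) :
    -(∫ x in α..ω, x * (1 + x) ^ 2) < 0 := by
  rw [integral_mul_one_add_sq, hfα, hfω]
  have hneg := cube_div_three_add_pow_four_div_four_neg (by linarith [hα.1]) hα.2
  have hpos : 0 < ω ^ 3 / 3 + ω ^ 4 / 4 := by positivity
  linarith

/-- For the van der Pol system with critical curve `f(x) = x²/2 + x³/3`, the slow
divergence integral `Ĩ(s) = −∫_{α₁(s)}^{ω₁(s)} x(1+x)² dx` is strictly negative for all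
`s ∈ (0,1/6)`, where `α₁(s) ∈ (−1,0)` and `ω₁(s) > 0` solve `f(x) = s`. -/
theorem stmt13 (s α ω : ℝ) (hs : s ∈ Ioo 0 (1/6 : ℝ))
    (hα : α ∈ Ioo (-1 : ℝ) 0) (hω : 0 < ω)
    (hfα : α ^ 2 / 2 + α ^ 3 / 3 = s)
    (hfω : ω ^ 2 / 2 + ω ^ 3 / 3 = s) :
    -(∫ x in α..ω, x * (1 + x) ^ 2) < 0 :=
  stmt13_general s α ω hα hω hfα hfω
end
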